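/- arXiv:2605.25210 — 5 statements merged into one kernel-verified Lean document; each statement's English description precedes it below -/
import Mathlib

section
/- Let d ≥ 1 and let p be an everywhere positive, continuously differentiable probability density on ℝ^d satisfying p(x) ≤ C₁ exp(-C₂‖x‖²) and ‖∇p(x)‖ ≤ C₁ exp(-C₂‖x‖²) for some constants C₁, C₂ > 0. Fix t > 0 and define p_t(x) = ∫_{ℝ^d} φ_t(x|x₀) p(x₀) dx₀. Then for every x ∈ ℝ^d, ∇ log p_t(x) = (1/α_t) ∫_{ℝ^d} ∇ log p(x₀) · ( φ_t(x|x₀) p(x₀) / ∫_{ℝ^d} φ_t(x|z) p(z) dz ) dx₀. -/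
set_option maxHeartbeats 1000000
set_option synthInstance.maxHeartbeats 400000


open MeasureTheory

/-- The transition density `φ_t(x'|x)` of the Ornstein–Uhlenbeck forward process:
the density of `N(α_t x, σ_t² I_d)` where `α_t = e^{-t}` and `σ_t² = 1 - e^{-2t}`. -/
noncomputable def ouDensity (d : ℕ) (t : ℝ) (x' x : EuclideanSpace ℝ (Fin d)) : ℝ :=
  (2 * Real.pi * (1 - Real.exp (-2 * t))) ^ (-(d : ℝ) / 2) *
    Real.exp (-‖x' - Real.exp (-t) • x‖ ^ 2 / (2 * (1 - Real.exp (-2 * t))))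

/-- `p_t(x') = ∫ φ_t(x'|x) p(x) dx`, the density of the OU forward process at time `t`. -/
noncomputable def forwardDensity (d : ℕ) (t : ℝ) (p : EuclideanSpace ℝ (Fin d) → ℝ)
    (x' : EuclideanSpace ℝ (Fin d)) : ℝ :=
  ∫ x, ouDensity d t x' x * p x

section helpers

variable {d : ℕ}

lemma integrable_gauss (b : ℝ) (hb : 0 < b) :
    Integrable (fun v : EuclideanSpace ℝ (Fin d) => Real.exp (-b * ‖v‖ ^ 2)) := by
  have h := (GaussianFourier.integrable_cexp_neg_mul_sq_norm_add_of_euclideanSpace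
      (ι := Fin d) (b := (b : ℂ)) (by simpa using hb) 0 0).norm
  refine h.congr (Filter.Eventually.of_forall fun v => ?_)
  simp only []
  rw [Complex.norm_exp]
  norm_num [← Complex.ofReal_pow]

lemma integral_comp_sub' {V : Type*} [NormedAddCommGroup V] [NormedSpace ℝ V]
    (φ : EuclideanSpace ℝ (Fin d) → V) (x' : EuclideanSpace ℝ (Fin d)) :
    ∫ y, φ (x' - y) = ∫ y, φ y := by
  have h1 := integral_neg_eq_self (fun u => φ (x' + u))
    (volume : Measure (EuclideanSpace ℝ (Fin d)))
  simp only [← sub_eq_add_neg] at h1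
  rw [h1, integral_add_left_eq_self φ x']

lemma integral_cov {V : Type*} [NormedAddCommGroup V] [NormedSpace ℝ V]
    (g : EuclideanSpace ℝ (Fin d) → ℝ) (w : EuclideanSpace ℝ (Fin d) → V)
    {a : ℝ} (ha : a ≠ 0) (x' : EuclideanSpace ℝ (Fin d)) :
    ∫ x₀, g (x' - a • x₀) • w x₀
      = |(a ^ d)⁻¹| • ∫ y, g y • w (a⁻¹ • (x' - y)) := by
  have h1 : (fun x₀ : EuclideanSpace ℝ (Fin d) => g (x' - a • x₀) • w x₀)
      = fun x₀ => (fun u : EuclideanSpace ℝ (Fin d) => g (x' - u) • w (a⁻¹ • u)) (a • x₀) := by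
    funext x₀
    simp [smul_smul, inv_mul_cancel₀ ha]
  have h2 := MeasureTheory.Measure.integral_comp_smul
    (μ := (volume : Measure (EuclideanSpace ℝ (Fin d))))
    (fun u => g (x' - u) • w (a⁻¹ • u)) a
  rw [h1, h2, finrank_euclideanSpace_fin]
  congr 1
  have := integral_comp_sub' (fun u : EuclideanSpace ℝ (Fin d) => g (x' - u) • w (a⁻¹ • u)) x'
  rw [← this]
  simp

lemma gradient_log_comp {f : EuclideanSpace ℝ (Fin d) → ℝ} {x : EuclideanSpace ℝ (Fin d)}
    (hf : DifferentiableAt ℝ f x) (hx : f x ≠ 0) :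
    gradient (fun z => Real.log (f z)) x = (f x)⁻¹ • gradient f x := by
  have h1 : HasGradientAt f (gradient f x) x := hf.hasGradientAt
  have h2 : HasFDerivAt (fun z => Real.log (f z))
      ((f x)⁻¹ • (InnerProductSpace.toDual ℝ _ (gradient f x))) x :=
    h1.hasFDerivAt.log hx
  have h3 := h2.hasGradientAt.gradient
  rw [h3, _root_.map_smul, LinearIsometryEquiv.symm_apply_apply]

end helpers

/-- For a positive `C¹` density `p` with Gaussian-tailed value and gradient,
the score `∇ log p_t` is `(1/α_t)` times the posterior average of `∇ log p(x₀)`. -/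
theorem score_posterior_representation_data_score
    {d : ℕ} (hd : 1 ≤ d) (C₁ C₂ : ℝ) (hC₁ : 0 < C₁) (hC₂ : 0 < C₂)
    (p : EuclideanSpace ℝ (Fin d) → ℝ)
    (hp_pos : ∀ x, 0 < p x) (hp_smooth : ContDiff ℝ 1 p)
    (hp_int : ∫ x, p x = 1)
    (hp_tail : ∀ x, p x ≤ C₁ * Real.exp (-C₂ * ‖x‖ ^ 2))
    (hgrad_tail : ∀ x, ‖gradient p x‖ ≤ C₁ * Real.exp (-C₂ * ‖x‖ ^ 2))
    (t : ℝ) (ht : 0 < t) :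
    ∀ x, gradient (fun z => Real.log (forwardDensity d t p z)) x
      = (Real.exp (-t))⁻¹ • ∫ x₀, ((ouDensity d t x x₀ * p x₀) / (∫ z, ouDensity d t x z * p z)) •
          gradient (fun z => Real.log (p z)) x₀ := by
  intro x
  have hp_diff : Differentiable ℝ p := hp_smooth.differentiable one_ne_zero
  have hp_cont : Continuous p := hp_diff.continuous
  set a : ℝ := Real.exp (-t) with ha_def
  have ha : 0 < a := Real.exp_pos _
  have ha' : a ≠ 0 := ha.ne'
  set s : ℝ := 1 - Real.exp (-2 * t) with hs_def
  have hs : 0 < s := by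
    have h1 : Real.exp (-2 * t) < 1 := by
      rw [Real.exp_lt_one_iff]; nlinarith
    simp only [hs_def]; linarith
  set c : ℝ := (2 * Real.pi * s) ^ (-(d : ℝ) / 2) with hc_def
  have hc : 0 < c := Real.rpow_pos_of_pos (by positivity) _
  set g : EuclideanSpace ℝ (Fin d) → ℝ := fun y => c * Real.exp (-‖y‖ ^ 2 / (2 * s))
    with hg_def
  have hou : ∀ x' x₀ : EuclideanSpace ℝ (Fin d), ouDensity d t x' x₀ = g (x' - a • x₀) :=
    fun _ _ => rfl
  have hg_cont : Continuous g := by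
    apply continuous_const.mul
    exact Real.continuous_exp.comp (by fun_prop)
  have hg_nonneg : ∀ y, 0 ≤ g y := fun y => by positivity
  have hg_pos : ∀ y, 0 < g y := fun y => by positivity
  have hexp_le_one : ∀ u : ℝ, u ≤ 0 → Real.exp u ≤ 1 := fun u hu => by
    calc Real.exp u ≤ Real.exp 0 := Real.exp_le_exp.mpr hu
      _ = 1 := Real.exp_zero
  have hg_le : ∀ y, g y ≤ c := fun y => by
    have h1 : Real.exp (-‖y‖ ^ 2 / (2 * s)) ≤ 1 := by
      apply hexp_le_one
      apply div_nonpos_of_nonpos_of_nonneg (neg_nonpos.mpr (by positivity)) (by positivity)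
    calc g y = c * Real.exp (-‖y‖ ^ 2 / (2 * s)) := rfl
      _ ≤ c * 1 := by exact mul_le_mul_of_nonneg_left h1 hc.le
      _ = c := mul_one c
  have hg_int : Integrable g := by
    have h := (integrable_gauss (d := d) (2 * s)⁻¹ (by positivity)).const_mul c
    refine h.congr (Filter.Eventually.of_forall fun y => ?_)
    simp only [hg_def]
    congr 1
    ring
  have hp_int' : Integrable p := by
    by_contra h
    rw [integral_undef h] at hp_int
    exact one_ne_zero hp_int.symm
  have hp_le : ∀ z, p z ≤ C₁ := fun z => by
    have h1 := hp_tail z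
    have h2 : Real.exp (-C₂ * ‖z‖ ^ 2) ≤ 1 := hexp_le_one _ (by nlinarith [sq_nonneg ‖z‖])
    nlinarith
  have hfderiv_le : ∀ z : EuclideanSpace ℝ (Fin d), ‖fderiv ℝ p z‖ ≤ C₁ := fun z => by
    have h0 : ‖(InnerProductSpace.toDual ℝ (EuclideanSpace ℝ (Fin d))).symm (fderiv ℝ p z)‖
        ≤ C₁ * Real.exp (-C₂ * ‖z‖ ^ 2) := hgrad_tail z
    rw [LinearIsometryEquiv.norm_map] at h0
    have h2 : Real.exp (-C₂ * ‖z‖ ^ 2) ≤ 1 := hexp_le_one _ (by nlinarith [sq_nonneg ‖z‖])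
    nlinarith [norm_nonneg (fderiv ℝ p z)]
  have hgrad_cont : Continuous (fun z => gradient p z) := by
    show Continuous fun z =>
      (InnerProductSpace.toDual ℝ (EuclideanSpace ℝ (Fin d))).symm (fderiv ℝ p z)
    exact (InnerProductSpace.toDual ℝ _).symm.continuous.comp
      (hp_smooth.continuous_fderiv one_ne_zero)
  -- integrability of the basic integrands
  have hint1 : ∀ x' : EuclideanSpace ℝ (Fin d),
      Integrable (fun x₀ => g (x' - a • x₀) * p x₀) := fun x' => by
    refine hp_int'.bdd_mul (c := c) ?_ (Filter.Eventually.of_forall fun x₀ => ?_)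
    · exact (show Continuous (fun x₀ : EuclideanSpace ℝ (Fin d) => g (x' - a • x₀)) from
        hg_cont.comp (continuous_const.sub (continuous_id.const_smul a))).aestronglyMeasurable
    · rw [Real.norm_eq_abs, abs_of_nonneg (hg_nonneg _)]
      exact hg_le _
  -- positivity of the forward density
  have hfd_pos : ∀ x', 0 < forwardDensity d t p x' := fun x' => by
    have heq : forwardDensity d t p x' = ∫ x₀, g (x' - a • x₀) * p x₀ := by
      simp only [forwardDensity, hou]
    rw [heq]
    refine (integral_pos_iff_support_of_nonneg_ae
      (Filter.Eventually.of_forall fun x₀ => ?_) (hint1 x')).mpr ?_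
    · exact mul_nonneg (hg_nonneg _) (hp_pos _).le
    · have hsupp : Function.support (fun x₀ => g (x' - a • x₀) * p x₀) = Set.univ :=
        Set.eq_univ_iff_forall.mpr fun x₀ => (mul_pos (hg_pos _) (hp_pos _)).ne'
      rw [hsupp]
      exact isOpen_univ.measure_pos volume Set.univ_nonempty
  set k : ℝ := |(a ^ d)⁻¹| with hk_def
  have hk_pos : 0 < k := by positivity
  -- change of variables for the forward density
  have hfd : ∀ x', forwardDensity d t p x' = k • ∫ y, g y * p (a⁻¹ • (x' - y)) := fun x' => by
    have h1 := integral_cov (d := d) g p ha' x'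
    simp only [smul_eq_mul] at h1
    simp only [forwardDensity, hou]
    exact h1
  -- differentiation under the integral sign
  set D : EuclideanSpace ℝ (Fin d) →L[ℝ] ℝ :=
    ∫ y, (g y * a⁻¹) • fderiv ℝ p (a⁻¹ • (x - y)) with hD_def
  have key : HasFDerivAt (fun x' => ∫ y, g y * p (a⁻¹ • (x' - y))) D x := by
    refine hasFDerivAt_integral_of_dominated_of_fderiv_le
      (F' := fun x' y => (g y * a⁻¹) • fderiv ℝ p (a⁻¹ • (x' - y)))
      (bound := fun y => (|a⁻¹| * C₁) * g y) (Metric.ball_mem_nhds x one_pos)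
      (Filter.Eventually.of_forall fun x' => ?_) ?_ ?_
      (Filter.Eventually.of_forall fun y => fun x' _ => ?_) ?_
      (Filter.Eventually.of_forall fun y => fun x' _ => ?_)
    · exact (hg_cont.fun_mul (hp_cont.comp ((continuous_const.sub continuous_id).fun_const_smul
        a⁻¹))).aestronglyMeasurable
    · have h1 : Integrable fun y => p (a⁻¹ • (x - y)) * g y := by
        refine hg_int.bdd_mul (c := C₁) ?_ (Filter.Eventually.of_forall fun y => ?_)
        · exact (hp_cont.comp ((continuous_const.sub continuous_id).fun_const_smul
            a⁻¹)).aestronglyMeasurable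
        · rw [Real.norm_eq_abs, abs_of_nonneg (hp_pos _).le]
          exact hp_le _
      exact h1.congr (Filter.Eventually.of_forall fun y => mul_comm _ _)
    · exact ((hg_cont.mul_const a⁻¹).fun_smul
        ((hp_smooth.continuous_fderiv one_ne_zero).comp ((continuous_const.sub continuous_id).fun_const_smul
          a⁻¹))).aestronglyMeasurable
    · refine le_trans (ContinuousLinearMap.opNorm_smul_le _ _) ?_
      rw [Real.norm_eq_abs, abs_mul, abs_of_nonneg (hg_nonneg y)]
      calc g y * |a⁻¹| * ‖fderiv ℝ p (a⁻¹ • (x' - y))‖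
          ≤ g y * |a⁻¹| * C₁ := mul_le_mul_of_nonneg_left (hfderiv_le _) (by positivity)
        _ = (|a⁻¹| * C₁) * g y := by ring
    · exact (hg_int.const_mul _).congr (Filter.Eventually.of_forall fun y => rfl)
    · have h1 : HasFDerivAt (fun x'' : EuclideanSpace ℝ (Fin d) => a⁻¹ • (x'' - y))
          (a⁻¹ • ContinuousLinearMap.id ℝ (EuclideanSpace ℝ (Fin d))) x' :=
        ((hasFDerivAt_id x').sub_const y).const_smul a⁻¹
      have h2 := (hp_diff (a⁻¹ • (x' - y))).hasFDerivAt.comp x' h1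
      have h3 := h2.const_mul (g y)
      have hEq : (g y * a⁻¹) • fderiv ℝ p (a⁻¹ • (x' - y))
          = g y • (fderiv ℝ p (a⁻¹ • (x' - y))).comp
              (a⁻¹ • ContinuousLinearMap.id ℝ (EuclideanSpace ℝ (Fin d))) := by
        ext v
        simp only [ContinuousLinearMap.smul_apply, ContinuousLinearMap.coe_comp',
          Function.comp_apply, ContinuousLinearMap.coe_id', id_eq,
          ContinuousLinearMap.map_smul, smul_eq_mul]
        ring
      rw [hEq]
      exact h3
  -- derivative of the forward density
  have hfd_deriv : HasFDerivAt (forwardDensity d t p) (k • D) x := by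
    have h1 := key.const_smul k
    have heq : (fun x' => k • ∫ y, g y * p (a⁻¹ • (x' - y))) = forwardDensity d t p :=
      funext fun x' => (hfd x').symm
    rw [← heq]; exact h1
  -- gradient of log of forward density
  have hlog : HasFDerivAt (fun z => Real.log (forwardDensity d t p z))
      ((forwardDensity d t p x)⁻¹ • (k • D)) x := hfd_deriv.log (hfd_pos x).ne'
  have hgrad_log : gradient (fun z => Real.log (forwardDensity d t p z)) x
      = (forwardDensity d t p x)⁻¹ • k •
        ((InnerProductSpace.toDual ℝ (EuclideanSpace ℝ (Fin d))).symm D) := by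
    have h1 := hlog.hasGradientAt.gradient
    rw [h1, _root_.map_smul, _root_.map_smul]
  -- identify toDual.symm D with a vector-valued integral
  have hint_f' : Integrable (fun y => (g y * a⁻¹) • fderiv ℝ p (a⁻¹ • (x - y))) := by
    refine Integrable.mono' (hg_int.const_mul (|a⁻¹| * C₁)) ?_
      (Filter.Eventually.of_forall fun y => ?_)
    · exact ((hg_cont.mul_const a⁻¹).fun_smul
        ((hp_smooth.continuous_fderiv one_ne_zero).comp ((continuous_const.sub continuous_id).fun_const_smul
          a⁻¹))).aestronglyMeasurable
    · refine le_trans (ContinuousLinearMap.opNorm_smul_le _ _) ?_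
      rw [Real.norm_eq_abs, abs_mul, abs_of_nonneg (hg_nonneg y)]
      calc g y * |a⁻¹| * ‖fderiv ℝ p (a⁻¹ • (x - y))‖
          ≤ g y * |a⁻¹| * C₁ := mul_le_mul_of_nonneg_left (hfderiv_le _) (by positivity)
        _ = (|a⁻¹| * C₁) * g y := by ring
  set J : EuclideanSpace ℝ (Fin d) := ∫ y, g y • gradient p (a⁻¹ • (x - y)) with hJ_def
  have htoDual : (InnerProductSpace.toDual ℝ (EuclideanSpace ℝ (Fin d))).symm D
      = a⁻¹ • J := by
    have h0 := (LinearIsometry.integral_comp_comm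
      (μ := (volume : Measure (EuclideanSpace ℝ (Fin d))))
      (InnerProductSpace.toDual ℝ (EuclideanSpace ℝ (Fin d))).symm.toLinearIsometry
      (fun y => (g y * a⁻¹) • fderiv ℝ p (a⁻¹ • (x - y)))).symm
    simp only [LinearIsometryEquiv.coe_toLinearIsometry] at h0
    rw [hD_def, h0]
    have h1 : (fun y => (InnerProductSpace.toDual ℝ (EuclideanSpace ℝ (Fin d))).symm
        ((g y * a⁻¹) • fderiv ℝ p (a⁻¹ • (x - y))))
        = fun y => a⁻¹ • (g y • gradient p (a⁻¹ • (x - y))) := by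
      funext y
      rw [_root_.map_smul]
      rw [smul_smul, mul_comm a⁻¹ (g y)]
      rfl
    rw [h1, integral_smul]
  -- the posterior integral on the right-hand side
  set I : EuclideanSpace ℝ (Fin d) := ∫ x₀, g (x - a • x₀) • gradient p x₀ with hI_def
  have hIJ : I = k • J := by
    have h1 := integral_cov (d := d) g (fun z => gradient p z) ha' x
    exact h1
  have hrhs : ∫ x₀, ((ouDensity d t x x₀ * p x₀) / (∫ z, ouDensity d t x z * p z)) •
      gradient (fun z => Real.log (p z)) x₀
      = (forwardDensity d t p x)⁻¹ • I := by
    have hden : (∫ z, ouDensity d t x z * p z) = forwardDensity d t p x := rfl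
    have h1 : (fun x₀ => ((ouDensity d t x x₀ * p x₀) / (∫ z, ouDensity d t x z * p z)) •
        gradient (fun z => Real.log (p z)) x₀)
        = fun x₀ => (forwardDensity d t p x)⁻¹ • (g (x - a • x₀) • gradient p x₀) := by
      funext x₀
      rw [gradient_log_comp (hp_diff x₀) (hp_pos x₀).ne', hden, hou]
      rw [smul_smul, smul_smul]
      congr 1
      rw [div_eq_mul_inv, mul_comm (g (x - a • x₀) * p x₀) (forwardDensity d t p x)⁻¹,
        mul_assoc, mul_assoc, mul_inv_cancel₀ (hp_pos x₀).ne', mul_one]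
    rw [h1, integral_smul]
  rw [hgrad_log, htoDual, hrhs, hIJ]
  rw [smul_smul, smul_smul, smul_smul, smul_smul]
  congr 1
  ring
end

section
/- Let P and Q be probability measures on a common measurable space with TV(P, Q) ≤ ε, and let Ω be a measurable set with Q(Ω) ≥ 1 − δ. Suppose δ + ε ≤ 1/2. Then P(Ω) ≥ 1/2 > 0, so the truncated probability measure P̃ defined by P̃(A) := P(A ∩ Ω)/P(Ω) for measurable A is well defined, and TV(P̃, Q) ≤ δ + 2ε. -/
/-!
Conditioning a probability measure on `S` moves it by at most `P(Sᶜ)` in total variation, and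
`P(Sᶜ) ≤ Q(Sᶜ) + ε ≤ δ + ε`; the triangle inequality through `P` gives `δ + 2ε`.
-/

open MeasureTheory

noncomputable def tvDist {Ω : Type*} [MeasurableSpace Ω] (P Q : Measure Ω) : ℝ :=
  ⨆ A : {A : Set Ω // MeasurableSet A}, |(P A).toReal - (Q A).toReal|

open ProbabilityTheory Set

section
variable {Ω : Type*} [MeasurableSpace Ω]

lemma abs_measureReal_sub_le_tvDist (P Q : Measure Ω) [IsFiniteMeasure P] [IsFiniteMeasure Q]
    {A : Set Ω} (hA : MeasurableSet A) : |P.real A - Q.real A| ≤ tvDist P Q := by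
  refine le_ciSup (f := fun A : {A : Set Ω // MeasurableSet A} ↦ |(P A).toReal - (Q A).toReal|)
    ⟨P.real univ + Q.real univ, ?_⟩ ⟨A, hA⟩
  rintro _ ⟨B, rfl⟩
  have hP : P.real B ≤ P.real univ := measureReal_mono (subset_univ _)
  have hQ : Q.real B ≤ Q.real univ := measureReal_mono (subset_univ _)
  show |P.real B - Q.real B| ≤ _
  rw [abs_le]
  constructor <;> linarith [measureReal_nonneg (μ := P) (s := B),
    measureReal_nonneg (μ := Q) (s := B)]

lemma tvDist_le_of_forall {P Q : Measure Ω} {c : ℝ}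
    (h : ∀ A, MeasurableSet A → |P.real A - Q.real A| ≤ c) : tvDist P Q ≤ c :=
  have : Nonempty {A : Set Ω // MeasurableSet A} := ⟨⟨∅, .empty⟩⟩
  ciSup_le fun A ↦ h A A.2

lemma tvDist_triangle (P Q R : Measure Ω) [IsFiniteMeasure P] [IsFiniteMeasure Q]
    [IsFiniteMeasure R] : tvDist P R ≤ tvDist P Q + tvDist Q R :=
  tvDist_le_of_forall fun _ hA ↦ (abs_sub_le _ _ _).trans
    (add_le_add (abs_measureReal_sub_le_tvDist P Q hA) (abs_measureReal_sub_le_tvDist Q R hA))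

lemma tvDist_cond_le (P : Measure Ω) [IsProbabilityMeasure P] {S : Set Ω} (hS : MeasurableSet S)
    (hPS : P S ≠ 0) : tvDist P[|S] P ≤ P.real Sᶜ := by
  refine tvDist_le_of_forall fun A _ ↦ ?_
  set s := P.real S
  set a := P.real (A ∩ S)
  set b := P.real (A \ S)
  have hs : 0 < s := ENNReal.toReal_pos hPS (measure_ne_top _ _)
  have hcond : P[|S].real A = a / s := by
    rw [measureReal_def, cond_apply hS, ENNReal.toReal_mul, ENNReal.toReal_inv, inter_comm]
    exact inv_mul_eq_div _ _
  have hsplit : P.real A = a + b := (measureReal_inter_add_sdiff hS).symm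
  have ha : a ≤ s := measureReal_mono inter_subset_right
  have hb : b ≤ 1 - s := by
    rw [← probReal_compl_eq_one_sub hS]; exact measureReal_mono (sdiff_subset_compl A S)
  have hrescale : a / s - a = a / s * (1 - s) := by field_simp
  have hgain : 0 ≤ a / s - a ∧ a / s - a ≤ 1 - s := by
    have h1s : 0 ≤ 1 - s := sub_nonneg.2 measureReal_le_one
    rw [hrescale]
    exact ⟨mul_nonneg (div_nonneg measureReal_nonneg hs.le) h1s,
      mul_le_of_le_one_left h1s ((div_le_one hs).2 ha)⟩
  rw [hcond, hsplit, probReal_compl_eq_one_sub hS, abs_le]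
  constructor <;> linarith [measureReal_nonneg (μ := P) (s := A \ S)]

end

theorem tv_truncation_bound_general {Ω : Type} [MeasurableSpace Ω] (P Q : Measure Ω)
    [IsProbabilityMeasure P] [IsProbabilityMeasure Q]
    (ε δ : ℝ)
    (hTV : tvDist P Q ≤ ε)
    (S : Set Ω) (hS : MeasurableSet S) (hQS : 1 - δ ≤ (Q S).toReal)
    (hsum : δ + ε ≤ 1 / 2) :
    1 / 2 ≤ (P S).toReal ∧ 0 < (P S).toReal ∧
      tvDist ((P S)⁻¹ • P.restrict S) Q ≤ δ + 2 * ε := by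
  have hPQ := (abs_le.1 ((abs_measureReal_sub_le_tvDist P Q hS).trans hTV)).1
  rw [measureReal_def, measureReal_def] at hPQ
  have hhalf : 1 / 2 ≤ (P S).toReal := by linarith
  have hPS : P S ≠ 0 := fun h ↦ by norm_num [h] at hhalf
  have hcompl : P.real Sᶜ ≤ δ + ε := by
    rw [probReal_compl_eq_one_sub hS, measureReal_def]; linarith
  refine ⟨hhalf, by linarith, ?_⟩
  calc tvDist P[|S] Q ≤ tvDist P[|S] P + tvDist P Q := tvDist_triangle _ _ _
    _ ≤ P.real Sᶜ + ε := add_le_add (tvDist_cond_le P hS hPS) hTV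
    _ ≤ δ + 2 * ε := by linarith

/-- If `TV(P,Q) ≤ ε`, `Q(S) ≥ 1-δ` and `δ + ε ≤ 1/2`, then `P(S) ≥ 1/2 > 0`,
so the truncation `P̃(A) = P(A ∩ S)/P(S)` is well defined, and `TV(P̃, Q) ≤ δ + 2ε`. -/
theorem tv_truncation_bound {Ω : Type} [MeasurableSpace Ω] (P Q : Measure Ω)
    [IsProbabilityMeasure P] [IsProbabilityMeasure Q]
    (ε δ : ℝ) (hε : 0 ≤ ε) (hδ : 0 ≤ δ)
    (hTV : tvDist P Q ≤ ε)
    (S : Set Ω) (hS : MeasurableSet S) (hQS : 1 - δ ≤ (Q S).toReal)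
    (hsum : δ + ε ≤ 1 / 2) :
    1 / 2 ≤ (P S).toReal ∧ 0 < (P S).toReal ∧
      tvDist ((P S)⁻¹ • P.restrict S) Q ≤ δ + 2 * ε :=
  tv_truncation_bound_general P Q ε δ hTV S hS hQS hsum
end

section
/- Let F be a nonempty set, K ≥ 1 an integer, and L_k, L̃_k : F → ℝ for k = 1,…,K. Let S : ℝ^K → ℝ satisfy the reverse triangle inequality |S(u) − S(v)| ≤ S(|u − v|) for all u, v ∈ ℝ^K. Suppose f̂ ∈ F minimizes f ↦ S(L̃₁(f),…,L̃_K(f)) over F. Then for every f* ∈ F, S(L₁(f̂),…,L_K(f̂)) − S(L₁(f*),…,L_K(f*)) ≤ 2 sup_{f∈F} S(|L₁(f) − L̃₁(f)|, …, |L_K(f) − L̃_K(f)|), where the supremum is taken in [0, +∞]. -/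
/-!
Empirical risk minimization argument: write `D f` for the scalarized deviation at `f`. The
reverse triangle inequality gives `|S(L(f)) − S(L̃(f))| ≤ D f` for every `f`, so passing from
`L` to `L̃` at `f̂`, using minimality of `f̂` for the surrogate, and passing back at `f*` costs
at most `D f̂ + D f* ≤ 2 sup D`.
-/

theorem sub_le_add_of_abs_sub_le_of_forall_le {F : Type*} {R Rt D : F → ℝ} {fhat : F}
    (hdev : ∀ f, |R f - Rt f| ≤ D f) (hmin : ∀ f, Rt fhat ≤ Rt f) (fstar : F) :
    R fhat - R fstar ≤ D fhat + D fstar := by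
  have hhat := (abs_le.mp (hdev fhat)).2
  have hstar := (abs_le.mp (hdev fstar)).1
  linarith [hmin fstar]

theorem ENNReal.ofReal_add_le_two_mul_iSup {F : Type*} (D : F → ℝ) (a b : F) :
    ENNReal.ofReal (D a + D b) ≤ 2 * ⨆ f, ENNReal.ofReal (D f) :=
  calc ENNReal.ofReal (D a + D b)
      ≤ ENNReal.ofReal (D a) + ENNReal.ofReal (D b) := ENNReal.ofReal_add_le
    _ ≤ (⨆ f, ENNReal.ofReal (D f)) + ⨆ f, ENNReal.ofReal (D f) :=
        add_le_add (le_iSup (fun f => ENNReal.ofReal (D f)) a)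
          (le_iSup (fun f => ENNReal.ofReal (D f)) b)
    _ = 2 * ⨆ f, ENNReal.ofReal (D f) := (two_mul _).symm

theorem scalarized_excess_risk_bound_general {F : Type} {K : ℕ}
    (L Lt : Fin K → F → ℝ)
    (S : (Fin K → ℝ) → ℝ)
    (hS : ∀ u v : Fin K → ℝ, |S u - S v| ≤ S fun k => |u k - v k|)
    (fhat : F) (hmin : ∀ f : F, S (fun k => Lt k fhat) ≤ S fun k => Lt k f) :
    ∀ fstar : F,
      ENNReal.ofReal (S (fun k => L k fhat) - S fun k => L k fstar)
        ≤ 2 * ⨆ f : F, ENNReal.ofReal (S fun k => |L k f - Lt k f|) := by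
  intro fstar
  have hexcess := sub_le_add_of_abs_sub_le_of_forall_le
    (R := fun f => S fun k => L k f) (Rt := fun f => S fun k => Lt k f)
    (fun f => hS _ _) hmin fstar
  exact (ENNReal.ofReal_le_ofReal hexcess).trans (ENNReal.ofReal_add_le_two_mul_iSup _ fhat fstar)

/-- If `f̂` minimizes the scalarized surrogate `S(L̃₁(f),…,L̃_K(f))` and `S`
satisfies the reverse triangle inequality, then the scalarized excess risk of `f̂` is at most
twice the uniform deviation `sup_f S(|L₁(f) − L̃₁(f)|,…,|L_K(f) − L̃_K(f)|)` (supremum in `[0,∞]`). -/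
theorem scalarized_excess_risk_bound {F : Type} [Nonempty F] {K : ℕ} (hK : 1 ≤ K)
    (L Lt : Fin K → F → ℝ)
    (S : (Fin K → ℝ) → ℝ)
    (hS : ∀ u v : Fin K → ℝ, |S u - S v| ≤ S fun k => |u k - v k|)
    (fhat : F) (hmin : ∀ f : F, S (fun k => Lt k fhat) ≤ S fun k => Lt k f) :
    ∀ fstar : F,
      ENNReal.ofReal (S (fun k => L k fhat) - S fun k => L k fstar)
        ≤ 2 * ⨆ f : F, ENNReal.ofReal (S fun k => |L k f - Lt k f|) :=
  scalarized_excess_risk_bound_general L Lt S hS fhat hmin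
end

section
/- Let K ≥ 1 and let S : ℝ^K → ℝ satisfy (i) the reverse triangle inequality |S(u) − S(v)| ≤ S(|u − v|) for all u, v ∈ ℝ^K; (ii) positive homogeneity S(αu) = αS(u) for all α ≥ 0 and u ∈ ℝ^K; (iii) the map u ↦ S(|u|) is nondecreasing in each coordinate; and (iv) |S(u)| ≤ ‖u‖_∞ for all u ∈ ℝ^K. Then for every u ∈ ℝ^K with all coordinates nonnegative, S(u)² ≤ S(u ⊙ u), where u ⊙ u denotes the coordinatewise square of u. -/
/-!
With `t = S u ≥ 0`, homogeneity gives `S (2t • u) = 2t²`. The tangent-line bound `2ta - t² ≤ a²`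
shows that `v = (2t • u - t²)₊` lies below `u ⊙ u` coordinatewise, while truncation keeps `v`
within `t²` of `2t • u` in the sup norm. Hence `2t² - S v ≤ t²` by (i) and (iv), and
`t² ≤ S v ≤ S (u ⊙ u)` by (iii).
-/

theorem abs_sub_max_sub_zero_le {x c : ℝ} (hx : 0 ≤ x) (hc : 0 ≤ c) :
    |x - max (x - c) 0| ≤ c := by
  rcases le_total c x with h | h
  · rw [max_eq_left (by linarith), sub_sub_cancel, abs_of_nonneg hc]
  · rw [max_eq_right (by linarith), sub_zero, abs_of_nonneg hx]
    exact h

section Scalarization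

variable {ι : Type*} {S : (ι → ℝ) → ℝ}

theorem map_zero_of_map_smul (hhom : ∀ α : ℝ, 0 ≤ α → ∀ u : ι → ℝ, S (α • u) = α * S u) :
    S 0 = 0 := by
  simpa using hhom 0 le_rfl 0

theorem map_nonneg_of_nonneg (hrev : ∀ u v : ι → ℝ, |S u - S v| ≤ S fun k => |u k - v k|)
    (hhom : ∀ α : ℝ, 0 ≤ α → ∀ u : ι → ℝ, S (α • u) = α * S u) {u : ι → ℝ} (hu : 0 ≤ u) :
    0 ≤ S u := by
  have h := hrev u 0
  simp only [map_zero_of_map_smul hhom, sub_zero, Pi.zero_apply, abs_of_nonneg (hu _)] at h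
  exact (abs_nonneg _).trans h

theorem map_le_map_of_nonneg_of_le
    (hmono : ∀ u v : ι → ℝ, (∀ k, |u k| ≤ |v k|) → S (fun k => |u k|) ≤ S fun k => |v k|)
    {u v : ι → ℝ} (hu : 0 ≤ u) (huv : u ≤ v) : S u ≤ S v := by
  have hv : 0 ≤ v := hu.trans huv
  have h := hmono u v fun k => by rw [abs_of_nonneg (hu k), abs_of_nonneg (hv k)]; exact huv k
  simpa only [abs_of_nonneg (hu _), abs_of_nonneg (hv _)] using h

theorem map_sub_map_le_norm_sub [Fintype ι]
    (hrev : ∀ u v : ι → ℝ, |S u - S v| ≤ S fun k => |u k - v k|)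
    (hbound : ∀ u : ι → ℝ, |S u| ≤ ‖u‖) (u v : ι → ℝ) : S u - S v ≤ ‖u - v‖ := by
  have habs : ‖fun k => |u k - v k|‖ ≤ ‖u - v‖ :=
    (pi_norm_le_iff_of_nonneg (norm_nonneg _)).2 fun k => by
      simpa only [Real.norm_eq_abs, abs_abs, Pi.sub_apply] using norm_le_pi_norm (u - v) k
  calc S u - S v ≤ |S u - S v| := le_abs_self _
    _ ≤ S fun k => |u k - v k| := hrev u v
    _ ≤ |S (fun k => |u k - v k|)| := le_abs_self _
    _ ≤ ‖u - v‖ := (hbound _).trans habs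

end Scalarization

theorem scalarization_square_bound_general {K : ℕ} (S : (Fin K → ℝ) → ℝ)
    (hrev : ∀ u v : Fin K → ℝ, |S u - S v| ≤ S fun k => |u k - v k|)
    (hhom : ∀ α : ℝ, 0 ≤ α → ∀ u : Fin K → ℝ, S (α • u) = α * S u)
    (hmono : ∀ u v : Fin K → ℝ, (∀ k, |u k| ≤ |v k|) →
      S (fun k => |u k|) ≤ S fun k => |v k|)
    (hbound : ∀ u : Fin K → ℝ, |S u| ≤ ‖u‖) :
    ∀ u : Fin K → ℝ, (∀ k, 0 ≤ u k) → (S u) ^ 2 ≤ S fun k => (u k) ^ 2 := by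
  intro u hu
  set t := S u
  have ht : 0 ≤ t := map_nonneg_of_nonneg hrev hhom hu
  set v : Fin K → ℝ := fun k => max (2 * t * u k - t ^ 2) 0
  have hv : 0 ≤ v := fun k => le_max_right _ _
  have hvu : v ≤ fun k => u k ^ 2 := fun k =>
    max_le (by nlinarith [sq_nonneg (u k - t)]) (sq_nonneg _)
  have hdist : ‖(2 * t) • u - v‖ ≤ t ^ 2 :=
    (pi_norm_le_iff_of_nonneg (sq_nonneg t)).2 fun k => by
      simpa only [Real.norm_eq_abs, Pi.sub_apply, Pi.smul_apply, smul_eq_mul] using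
        abs_sub_max_sub_zero_le (by have := hu k; positivity) (sq_nonneg t)
  have hgap : 2 * t * t - S v ≤ t ^ 2 := by
    rw [← hhom _ (by positivity) u]
    exact (map_sub_map_le_norm_sub hrev hbound _ _).trans hdist
  calc t ^ 2 ≤ S v := by linarith
    _ ≤ S fun k => u k ^ 2 := map_le_map_of_nonneg_of_le hmono hv hvu

/-- For a scalarization `S` satisfying the reverse triangle inequality,
positive homogeneity, coordinatewise monotonicity of `u ↦ S(|u|)`, and `|S(u)| ≤ ‖u‖_∞`,
one has `S(u)² ≤ S(u ⊙ u)` for every coordinatewise-nonnegative `u`. -/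
theorem scalarization_square_bound {K : ℕ} (hK : 1 ≤ K) (S : (Fin K → ℝ) → ℝ)
    (hrev : ∀ u v : Fin K → ℝ, |S u - S v| ≤ S fun k => |u k - v k|)
    (hhom : ∀ α : ℝ, 0 ≤ α → ∀ u : Fin K → ℝ, S (α • u) = α * S u)
    (hmono : ∀ u v : Fin K → ℝ, (∀ k, |u k| ≤ |v k|) →
      S (fun k => |u k|) ≤ S fun k => |v k|)
    (hbound : ∀ u : Fin K → ℝ, |S u| ≤ ‖u‖) :
    ∀ u : Fin K → ℝ, (∀ k, 0 ≤ u k) → (S u) ^ 2 ≤ S fun k => (u k) ^ 2 :=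
  scalarization_square_bound_general S hrev hhom hmono hbound
end

section
/- Let ψ : (0,∞) → (0,∞) be nondecreasing with r ↦ ψ(r)/√r nonincreasing on (0,∞), and let r* > 0 satisfy ψ(r*) ≤ r*. If U > 0 and a, b ≥ 0 satisfy U ≤ a + b·ψ(U), then U ≤ 2a + (1 + b²) r*. -/
/-!
Below `r*` the bound is immediate. Above it, the sub-root property gives
`ψ(U)/√U ≤ ψ(r*)/√r* ≤ √r*`, so `U ≤ a + b √r* √U`; the AM–GM inequality
`b √r* √U ≤ (b² r* + U)/2` then absorbs half of `U` into the left-hand side.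
-/

open Real

lemma le_two_mul_add_sq_of_le_add_mul_sqrt {U a c : ℝ} (hU : 0 ≤ U)
    (h : U ≤ a + c * √U) : U ≤ 2 * a + c ^ 2 := by
  have amgm : 2 * c * √U ≤ c ^ 2 + √U ^ 2 := two_mul_le_add_sq c √U
  rw [sq_sqrt hU] at amgm
  linarith

lemma le_sqrt_mul_sqrt_of_div_sqrt_le {ψ : ℝ → ℝ} {r s : ℝ} (hr : 0 < r) (hrs : r ≤ s)
    (hfix : ψ r ≤ r) (hsub : ψ s / √s ≤ ψ r / √r) : ψ s ≤ √r * √s := by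
  have hs : 0 < √s := sqrt_pos.mpr (hr.trans_le hrs)
  have hfix' : ψ r / √r ≤ √r := by
    rw [div_le_iff₀ (sqrt_pos.mpr hr), mul_self_sqrt hr.le]
    exact hfix
  calc ψ s = ψ s / √s * √s := (div_mul_cancel₀ _ hs.ne').symm
    _ ≤ √r * √s := by gcongr; exact hsub.trans hfix'

theorem subroot_self_bounding_general (ψ : ℝ → ℝ)
    (hsub : ∀ r s, 0 < r → r ≤ s → ψ s / Real.sqrt s ≤ ψ r / Real.sqrt r)
    (rstar : ℝ) (hr : 0 < rstar) (hfix : ψ rstar ≤ rstar)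
    (U a b : ℝ) (ha : 0 ≤ a) (hb : 0 ≤ b)
    (hineq : U ≤ a + b * ψ U) :
    U ≤ 2 * a + (1 + b ^ 2) * rstar := by
  rcases le_or_gt U rstar with hle | hgt
  · have : 0 ≤ b ^ 2 * rstar := by positivity
    linarith
  · have hψ : ψ U ≤ √rstar * √U :=
      le_sqrt_mul_sqrt_of_div_sqrt_le hr hgt.le hfix (hsub rstar U hr hgt.le)
    have hself : U ≤ a + b * √rstar * √U := by
      calc U ≤ a + b * ψ U := hineq
        _ ≤ a + b * (√rstar * √U) := by gcongr
        _ = a + b * √rstar * √U := by ring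
    calc U ≤ 2 * a + (b * √rstar) ^ 2 :=
          le_two_mul_add_sq_of_le_add_mul_sqrt (hr.trans hgt).le hself
      _ = 2 * a + b ^ 2 * rstar := by rw [mul_pow, sq_sqrt hr.le]
      _ ≤ 2 * a + (1 + b ^ 2) * rstar := by linarith

/-- Self-bounding inequality for sub-root functions: if `ψ` is sub-root with
`ψ(r*) ≤ r*` for some `r* > 0`, and `U > 0`, `a, b ≥ 0` satisfy `U ≤ a + b ψ(U)`, then
`U ≤ 2a + (1 + b²) r*`. -/
theorem subroot_self_bounding (ψ : ℝ → ℝ)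
    (hpos : ∀ r, 0 < r → 0 < ψ r)
    (hmono : ∀ r s, 0 < r → r ≤ s → ψ r ≤ ψ s)
    (hsub : ∀ r s, 0 < r → r ≤ s → ψ s / Real.sqrt s ≤ ψ r / Real.sqrt r)
    (rstar : ℝ) (hr : 0 < rstar) (hfix : ψ rstar ≤ rstar)
    (U a b : ℝ) (hU : 0 < U) (ha : 0 ≤ a) (hb : 0 ≤ b)
    (hineq : U ≤ a + b * ψ U) :
    U ≤ 2 * a + (1 + b ^ 2) * rstar :=
  subroot_self_bounding_general ψ hsub rstar hr hfix U a b ha hb hineq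
end
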